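/- Let 𝔤 be the 4-dimensional real Lie algebra e(2) ⊕ ℝ with basis e₁, e₂, e₃, e₄ and nonzero brackets [e₁,e₃] = e₂, [e₂,e₃] = −e₁, and let F be a nonzero 2-cocycle of 𝔤 with F(e₁,e₂) · F(e₃,e₄) = 0. Then the kernel of F, i.e. the subspace {v ∈ 𝔤 : F(v,w) = 0 for all w ∈ 𝔤}, has dimension exactly 2. -/

import Mathlib

noncomputable section

/-- The Lie bracket of the Lie algebra `e(2) ⊕ ℝ` on `ℝ⁴`, in the basis
`e₁ = e 0, e₂ = e 1, e₃ = e 2, e₄ = e 3` with nonzero brackets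
`[e₁,e₃] = e₂`, `[e₂,e₃] = -e₁`. -/
def bra (x y : Fin 4 → ℝ) : Fin 4 → ℝ :=
  ![-(x 1 * y 2 - x 2 * y 1), x 0 * y 2 - x 2 * y 0, 0, 0]

/-- The standard basis `e₁, e₂, e₃, e₄` (indexed from `0`). -/
def e (a : Fin 4) : Fin 4 → ℝ := Pi.single a 1

/-- `F` is a 2-cocycle of `e(2) ⊕ ℝ` with values in `ℝ`. -/
def IsCocycle (F : (Fin 4 → ℝ) →ₗ[ℝ] (Fin 4 → ℝ) →ₗ[ℝ] ℝ) : Prop :=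
  ∀ x y z : Fin 4 → ℝ, F (bra x y) z + F (bra y z) x + F (bra z x) y = 0

/-! The cocycle identity with the central vector `e₄` forces `F(e₁,e₄) = F(e₂,e₄) = 0`, so
`F = a e¹∧e² + b e¹∧e³ + c e²∧e³ + d e³∧e⁴`, whose Pfaffian is `a d`. When `a d = 0` and
`F ≠ 0`, some `F(eᵢ,eⱼ) ≠ 0` and the two functionals `F(·,eᵢ)`, `F(·,eⱼ)` already cut out the
kernel; they are independent because `F` is alternating, so the kernel has codimension 2. -/

namespace LinearMap.IsAlt

variable {K V : Type*} [Field K] [AddCommGroup V] [Module K V] {F : V →ₗ[K] V →ₗ[K] K}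

theorem surjective_prod_flip (hF : F.IsAlt) {w₁ w₂ : V} (h : F w₁ w₂ ≠ 0) :
    Function.Surjective ((F.flip w₁).prod (F.flip w₂)) := by
  rintro ⟨p, q⟩
  refine ⟨(q / F w₁ w₂) • w₁ - (p / F w₁ w₂) • w₂, ?_⟩
  simp [hF.self_eq_zero, ← hF.neg w₁ w₂, h]

theorem finrank_ker_add_two [FiniteDimensional K V] (hF : F.IsAlt) {w₁ w₂ : V}
    (h : F w₁ w₂ ≠ 0) (hker : ∀ v, F v w₁ = 0 → F v w₂ = 0 → F v = 0) :
    Module.finrank K (ker F) + 2 = Module.finrank K V := by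
  have hker_eq : ker F = ker ((F.flip w₁).prod (F.flip w₂)) := by
    ext v
    simp only [ker_prod, Submodule.mem_inf, mem_ker, flip_apply]
    exact ⟨fun hv => by simp [hv], fun hv => hker v hv.1 hv.2⟩
  have := finrank_range_add_finrank_ker ((F.flip w₁).prod (F.flip w₂))
  rw [range_eq_top.mpr (hF.surjective_prod_flip h), finrank_top, Module.finrank_prod,
    Module.finrank_self, ← hker_eq] at this
  omega

end LinearMap.IsAlt

lemma e_eq_basisFun : e = ⇑(Pi.basisFun ℝ (Fin 4)) := by
  funext i; rw [Pi.basisFun_apply]; rfl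

lemma bra_e_zero_e_two : bra (e 0) (e 2) = e 1 := by
  funext i; fin_cases i <;> simp [bra, e]

lemma bra_e_one_e_two : bra (e 1) (e 2) = -e 0 := by
  funext i; fin_cases i <;> simp [bra, e]

lemma bra_e_three (x : Fin 4 → ℝ) : bra x (e 3) = 0 := by
  funext i; fin_cases i <;> simp [bra, e]

lemma e_three_bra (x : Fin 4 → ℝ) : bra (e 3) x = 0 := by
  funext i; fin_cases i <;> simp [bra, e]

lemma eq_sum_smul_e (v : Fin 4 → ℝ) : v = ∑ i, v i • e i := by
  rw [e_eq_basisFun]; exact ((Pi.basisFun ℝ (Fin 4)).sum_repr v).symm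

lemma linearMap_eq_zero_of_apply_e {f : (Fin 4 → ℝ) →ₗ[ℝ] ℝ} (h : ∀ i, f (e i) = 0) : f = 0 :=
  (Pi.basisFun ℝ (Fin 4)).ext fun i => by simpa [e_eq_basisFun] using h i

namespace IsCocycle

variable {F : (Fin 4 → ℝ) →ₗ[ℝ] (Fin 4 → ℝ) →ₗ[ℝ] ℝ}

lemma apply_e_zero_e_three (hF : IsCocycle F) : F (e 0) (e 3) = 0 := by
  simpa [bra_e_one_e_two, bra_e_three, e_three_bra] using hF (e 1) (e 2) (e 3)

lemma apply_e_one_e_three (hF : IsCocycle F) : F (e 1) (e 3) = 0 := by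
  simpa [bra_e_zero_e_two, bra_e_three, e_three_bra] using hF (e 0) (e 2) (e 3)

theorem apply_eq (hFalt : F.IsAlt) (hF : IsCocycle F) (v w : Fin 4 → ℝ) :
    F v w = F (e 0) (e 1) * (v 0 * w 1 - v 1 * w 0) + F (e 0) (e 2) * (v 0 * w 2 - v 2 * w 0)
      + F (e 1) (e 2) * (v 1 * w 2 - v 2 * w 1) + F (e 2) (e 3) * (v 2 * w 3 - v 3 * w 2) := by
  conv_lhs => rw [eq_sum_smul_e v, eq_sum_smul_e w]
  simp only [Fin.sum_univ_four, map_add, map_smul, LinearMap.add_apply, LinearMap.smul_apply,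
    smul_eq_mul, hFalt.self_eq_zero, hF.apply_e_zero_e_three,
    hF.apply_e_one_e_three, ← hFalt.neg (e 0) (e 1), ← hFalt.neg (e 0) (e 2),
    ← hFalt.neg (e 1) (e 2), ← hFalt.neg (e 2) (e 3), ← hFalt.neg (e 0) (e 3),
    ← hFalt.neg (e 1) (e 3)]
  ring

lemma apply_e (hFalt : F.IsAlt) (hF : IsCocycle F) (v : Fin 4 → ℝ) :
    F v (e 0) = -(F (e 0) (e 1) * v 1) - F (e 0) (e 2) * v 2 ∧
    F v (e 1) = F (e 0) (e 1) * v 0 - F (e 1) (e 2) * v 2 ∧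
    F v (e 2) = F (e 0) (e 2) * v 0 + F (e 1) (e 2) * v 1 - F (e 2) (e 3) * v 3 ∧
    F v (e 3) = F (e 2) (e 3) * v 2 := by
  refine ⟨?_, ?_, ?_, ?_⟩ <;> rw [hF.apply_eq hFalt] <;> simp [e] <;> ring

theorem exists_pair_determining_ker (hFalt : F.IsAlt) (hF : IsCocycle F) (hF0 : F ≠ 0)
    (hdeg : F (e 0) (e 1) * F (e 2) (e 3) = 0) :
    ∃ i j, F (e i) (e j) ≠ 0 ∧ ∀ v, F v (e i) = 0 → F v (e j) = 0 → F v = 0 := by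
  have hcoord := hF.apply_e hFalt
  have hzero : ∀ v, (∀ k, F v (e k) = 0) → F v = 0 := fun v => linearMap_eq_zero_of_apply_e
  generalize ha : F (e 0) (e 1) = a at hcoord hdeg
  generalize hb : F (e 0) (e 2) = b at hcoord
  generalize hc : F (e 1) (e 2) = c at hcoord
  generalize hd : F (e 2) (e 3) = d at hcoord hdeg
  rcases eq_or_ne d 0 with rfl | hd₀
  · rcases eq_or_ne a 0 with rfl | ha₀
    · rcases eq_or_ne b 0 with rfl | hb₀
      · have hc₀ : c ≠ 0 := by
          rintro rfl
          refine hF0 (LinearMap.ext fun v => hzero v fun k => ?_)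
          fin_cases k <;> simp [hcoord]
        refine ⟨1, 2, hc ▸ hc₀, fun v h₁ h₂ => hzero v fun k => ?_⟩
        obtain ⟨k₀, k₁, k₂, k₃⟩ := hcoord v
        fin_cases k <;> simp_all
      · refine ⟨0, 2, hb ▸ hb₀, fun v h₀ h₂ => hzero v fun k => ?_⟩
        obtain ⟨k₀, k₁, k₂, k₃⟩ := hcoord v
        fin_cases k <;> simp_all
    · refine ⟨0, 1, ha ▸ ha₀, fun v h₀ h₁ => hzero v fun k => ?_⟩
      obtain ⟨k₀, k₁, k₂, k₃⟩ := hcoord v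
      have h₂ : F v (e 2) = 0 := by
        refine mul_left_cancel₀ ha₀ ?_
        linear_combination a * k₂ + c * (k₀ - h₀) - b * (k₁ - h₁)
      fin_cases k
      exacts [h₀, h₁, h₂, by simpa using k₃]
  · obtain rfl : a = 0 := (mul_eq_zero.mp hdeg).resolve_right hd₀
    refine ⟨2, 3, hd ▸ hd₀, fun v h₂ h₃ => hzero v fun k => ?_⟩
    obtain ⟨k₀, k₁, k₂, k₃⟩ := hcoord v
    fin_cases k <;> simp_all

end IsCocycle

/-- a nonzero degenerate 2-cocycle of `e(2) ⊕ ℝ`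
(`F(e₁,e₂)·F(e₃,e₄) = 0`) has a kernel of dimension exactly 2. -/
theorem degenerate_cocycle_kernel_dim_two
    (F : (Fin 4 → ℝ) →ₗ[ℝ] (Fin 4 → ℝ) →ₗ[ℝ] ℝ)
    (hFalt : ∀ x : Fin 4 → ℝ, F x x = 0) (hF : IsCocycle F)
    (hF0 : F ≠ 0) (hdeg : F (e 0) (e 1) * F (e 2) (e 3) = 0) :
    Module.finrank ℝ (LinearMap.ker F) = 2 := by
  obtain ⟨i, j, hij, hker⟩ := hF.exists_pair_determining_ker hFalt hF0 hdeg
  have := LinearMap.IsAlt.finrank_ker_add_two hFalt hij hker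
  rw [Module.finrank_fin_fun] at this
  omega
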